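/- Let G be the generating function of a branching random walk on a countable set X with first moments m_{xy} and their iterates m^{(n)}_{xy}, and let q̄ ∈ [0,1]^X be the pointwise limit of the iterates q_0 := 𝟎, q_{n+1} := G(q_n). If q̄(x) < 1 for some x ∈ X, then ∑_{y∈X} m^{(n)}_{xy} ≥ 1 − q̄(x) for every n ∈ ℕ; in particular, global survival starting from x implies liminf_{n→∞} ∑_{y∈X} m^{(n)}_{xy} > 0. -/

import Mathlib

open Filter ENNReal

/-- The generating function of a branching random walk on `X` with offspring
distributions `ν x` on the set of finitely supported functions `X →₀ ℕ`:
`G(q|x) = ∑_f ν_x(f) ∏_y q(y)^{f(y)}`. -/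
noncomputable def brwG {X : Type*} (ν : X → (X →₀ ℕ) → ℝ) (q : X → ℝ) (x : X) : ℝ :=
  ∑' f : X →₀ ℕ, ν x f * f.prod fun y k => q y ^ k

/-- The iterates `q_0 := 0`, `q_{n+1} := G(q_n)`. -/
noncomputable def brwIter {X : Type*} (ν : X → (X →₀ ℕ) → ℝ) : ℕ → X → ℝ
  | 0 => fun _ => 0
  | n + 1 => brwG ν (brwIter ν n)

/-- First moments `m_{xy} := ∑_f f(y) ν_x(f) ∈ [0,∞]`. -/
noncomputable def brwMom {X : Type*} (ν : X → (X →₀ ℕ) → ℝ) (x y : X) : ℝ≥0∞ :=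
  ∑' f : X →₀ ℕ, (f y : ℝ≥0∞) * ENNReal.ofReal (ν x f)

/-- Iterated first moments: `m⁽⁰⁾_{xy} = δ_{xy}`,
`m⁽ⁿ⁺¹⁾_{xy} = ∑_w m⁽ⁿ⁾_{xw} m_{wy}` (computed in `[0,∞]`). -/
noncomputable def brwMomIter {X : Type*} [DecidableEq X]
    (ν : X → (X →₀ ℕ) → ℝ) : ℕ → X → X → ℝ≥0∞
  | 0 => fun x y => if x = y then 1 else 0
  | n + 1 => fun x y => ∑' w : X, brwMomIter ν n x w * brwMom ν w y

/-! For `q ∈ [0,1]^X`, the elementary bound `1 - ∏_y q(y)^{f(y)} ≤ ∑_y f(y) (1 - q(y))`,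
averaged over `ν_x`, gives `1 - G(q)(x) ≤ ∑_y m_{xy} (1 - q(y))`. Iterating from `q = 0`
yields `1 - q_n(x) ≤ ∑_y m⁽ⁿ⁾_{xy}`, and since the iterates `q_n` increase to `q̄`, the left side
is at least `1 - q̄(x) > 0` for every `n`. -/
section Elementary

lemma one_sub_prod_le_sum_one_sub {ι : Type*} (s : Finset ι) {g : ι → ℝ}
    (h0 : ∀ i ∈ s, 0 ≤ g i) (h1 : ∀ i ∈ s, g i ≤ 1) :
    1 - ∏ i ∈ s, g i ≤ ∑ i ∈ s, (1 - g i) := by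
  induction s using Finset.cons_induction with
  | empty => simp
  | cons a s _ ih =>
    simp only [Finset.mem_cons, forall_eq_or_imp] at h0 h1
    rw [Finset.prod_cons, Finset.sum_cons]
    have hP1 : ∏ i ∈ s, g i ≤ 1 := Finset.prod_le_one h0.2 h1.2
    -- `1 - a P = (1 - a) + a (1 - P)` and `a (1 - P) ≤ 1 - P`
    nlinarith [ih h0.2 h1.2, mul_le_mul_of_nonneg_right h1.1 (sub_nonneg.2 hP1)]

lemma one_sub_pow_le_mul_one_sub {a : ℝ} (ha : 0 ≤ a) (k : ℕ) : 1 - a ^ k ≤ k * (1 - a) := by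
  have := one_add_mul_le_pow (a := a - 1) (by linarith) k
  rw [add_sub_cancel] at this
  linarith

variable {X : Type*} {q : X → ℝ}

lemma Finsupp.prod_pow_nonneg (hq0 : 0 ≤ q) (f : X →₀ ℕ) : 0 ≤ f.prod fun y k => q y ^ k :=
  Finset.prod_nonneg fun y _ => pow_nonneg (hq0 y) _

lemma Finsupp.prod_pow_le_one (hq0 : 0 ≤ q) (hq1 : q ≤ 1) (f : X →₀ ℕ) :
    (f.prod fun y k => q y ^ k) ≤ 1 :=
  Finset.prod_le_one (fun y _ => pow_nonneg (hq0 y) _) fun y _ => pow_le_one₀ (hq0 y) (hq1 y)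

lemma Finsupp.one_sub_prod_pow_le_sum (hq0 : 0 ≤ q) (hq1 : q ≤ 1) (f : X →₀ ℕ) :
    1 - (f.prod fun y k => q y ^ k) ≤ f.sum fun y k => k * (1 - q y) :=
  calc 1 - (f.prod fun y k => q y ^ k) ≤ ∑ y ∈ f.support, (1 - q y ^ f y) :=
        one_sub_prod_le_sum_one_sub _ (fun y _ => pow_nonneg (hq0 y) _)
          fun y _ => pow_le_one₀ (hq0 y) (hq1 y)
    _ ≤ f.sum fun y k => k * (1 - q y) :=
        Finset.sum_le_sum fun y _ => one_sub_pow_le_mul_one_sub (hq0 y) (f y)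

lemma Finsupp.ofReal_one_sub_prod_pow_le_tsum (hq0 : 0 ≤ q) (hq1 : q ≤ 1) (f : X →₀ ℕ) :
    ENNReal.ofReal (1 - f.prod fun y k => q y ^ k) ≤
      ∑' y, (f y : ℝ≥0∞) * ENNReal.ofReal (1 - q y) :=
  calc ENNReal.ofReal (1 - f.prod fun y k => q y ^ k)
      ≤ ENNReal.ofReal (f.sum fun y k => k * (1 - q y)) :=
        ENNReal.ofReal_le_ofReal (f.one_sub_prod_pow_le_sum hq0 hq1)
    _ = ∑ y ∈ f.support, (f y : ℝ≥0∞) * ENNReal.ofReal (1 - q y) := by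
        rw [Finsupp.sum, ENNReal.ofReal_sum_of_nonneg (f := fun y => (f y : ℝ) * (1 - q y))
          fun y _ => mul_nonneg (Nat.cast_nonneg _) (sub_nonneg.2 (hq1 y))]
        simp only [ENNReal.ofReal_mul (Nat.cast_nonneg _), ENNReal.ofReal_natCast]
    _ ≤ ∑' y, (f y : ℝ≥0∞) * ENNReal.ofReal (1 - q y) := ENNReal.sum_le_tsum _

end Elementary

section GeneratingFunction

variable {X : Type*} {ν : X → (X →₀ ℕ) → ℝ} {q q' : X → ℝ}

lemma brwG_summable (hν0 : ∀ x f, 0 ≤ ν x f) (hν1 : ∀ x, HasSum (ν x) 1)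
    (hq0 : 0 ≤ q) (hq1 : q ≤ 1) (x : X) :
    Summable fun f : X →₀ ℕ => ν x f * f.prod fun y k => q y ^ k :=
  (hν1 x).summable.of_nonneg_of_le (fun f => mul_nonneg (hν0 x f) (f.prod_pow_nonneg hq0))
    fun f => mul_le_of_le_one_right (hν0 x f) (f.prod_pow_le_one hq0 hq1)

lemma brwG_nonneg (hν0 : ∀ x f, 0 ≤ ν x f) (hq0 : 0 ≤ q) : 0 ≤ brwG ν q :=
  fun x => tsum_nonneg fun f => mul_nonneg (hν0 x f) (f.prod_pow_nonneg hq0)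

lemma brwG_le_one (hν0 : ∀ x f, 0 ≤ ν x f) (hν1 : ∀ x, HasSum (ν x) 1)
    (hq0 : 0 ≤ q) (hq1 : q ≤ 1) : brwG ν q ≤ 1 := fun x => by
  rw [Pi.one_apply, ← (hν1 x).tsum_eq]
  exact (brwG_summable hν0 hν1 hq0 hq1 x).tsum_le_tsum
    (fun f => mul_le_of_le_one_right (hν0 x f) (f.prod_pow_le_one hq0 hq1)) (hν1 x).summable

lemma brwG_mono (hν0 : ∀ x f, 0 ≤ ν x f) (hν1 : ∀ x, HasSum (ν x) 1)
    (hq0 : 0 ≤ q) (hqq' : q ≤ q') (hq'1 : q' ≤ 1) : brwG ν q ≤ brwG ν q' := fun x =>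
  (brwG_summable hν0 hν1 hq0 (hqq'.trans hq'1) x).tsum_le_tsum
    (fun f => mul_le_mul_of_nonneg_left
      (Finset.prod_le_prod (fun y _ => pow_nonneg (hq0 y) _)
        fun y _ => pow_le_pow_left₀ (hq0 y) (hqq' y) _) (hν0 x f))
    (brwG_summable hν0 hν1 (hq0.trans hqq') hq'1 x)

lemma hasSum_mul_one_sub_prod_pow (hν0 : ∀ x f, 0 ≤ ν x f) (hν1 : ∀ x, HasSum (ν x) 1)
    (hq0 : 0 ≤ q) (hq1 : q ≤ 1) (x : X) :
    HasSum (fun f : X →₀ ℕ => ν x f * (1 - f.prod fun y k => q y ^ k)) (1 - brwG ν q x) := by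
  simpa only [brwG, mul_sub, mul_one] using (hν1 x).sub (brwG_summable hν0 hν1 hq0 hq1 x).hasSum

lemma ofReal_one_sub_brwG_le (hν0 : ∀ x f, 0 ≤ ν x f) (hν1 : ∀ x, HasSum (ν x) 1)
    (hq0 : 0 ≤ q) (hq1 : q ≤ 1) (x : X) :
    ENNReal.ofReal (1 - brwG ν q x) ≤ ∑' y, brwMom ν x y * ENNReal.ofReal (1 - q y) := by
  have hsum := hasSum_mul_one_sub_prod_pow hν0 hν1 hq0 hq1 x
  rw [← hsum.tsum_eq, ENNReal.ofReal_tsum_of_nonneg (fun f => mul_nonneg (hν0 x f)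
    (sub_nonneg.2 (f.prod_pow_le_one hq0 hq1))) hsum.summable]
  calc ∑' f, ENNReal.ofReal (ν x f * (1 - f.prod fun y k => q y ^ k))
      ≤ ∑' f, ∑' y, ENNReal.ofReal (ν x f) * ((f y : ℝ≥0∞) * ENNReal.ofReal (1 - q y)) :=
        ENNReal.tsum_le_tsum fun f => by
          rw [ENNReal.ofReal_mul (hν0 x f), ENNReal.tsum_mul_left]
          exact mul_le_mul_right (f.ofReal_one_sub_prod_pow_le_tsum hq0 hq1) _
    _ = ∑' y, brwMom ν x y * ENNReal.ofReal (1 - q y) := by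
        rw [ENNReal.tsum_comm]
        refine tsum_congr fun y => ?_
        rw [brwMom, ← ENNReal.tsum_mul_right]
        exact tsum_congr fun f => by ring

end GeneratingFunction

section Iteration

variable {X : Type*} {ν : X → (X →₀ ℕ) → ℝ}

/- Starting from an arbitrary `q` lets the induction split off the first generation,
`G^[n+1] q = G^[n] (G q)`, which matches the recursion `m⁽ⁿ⁺¹⁾ = m⁽ⁿ⁾ m`. -/
lemma ofReal_one_sub_iterate_brwG_le [DecidableEq X] (hν0 : ∀ x f, 0 ≤ ν x f)
    (hν1 : ∀ x, HasSum (ν x) 1) (n : ℕ) {q : X → ℝ} (hq0 : 0 ≤ q) (hq1 : q ≤ 1) (x : X) :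
    ENNReal.ofReal (1 - (brwG ν)^[n] q x) ≤
      ∑' y, brwMomIter ν n x y * ENNReal.ofReal (1 - q y) := by
  induction n generalizing q with
  | zero => simp [brwMomIter, ite_mul]
  | succ n ih =>
    rw [Function.iterate_succ_apply]
    calc ENNReal.ofReal (1 - (brwG ν)^[n] (brwG ν q) x)
        ≤ ∑' w, brwMomIter ν n x w * ENNReal.ofReal (1 - brwG ν q w) :=
          ih (brwG_nonneg hν0 hq0) (brwG_le_one hν0 hν1 hq0 hq1)
      _ ≤ ∑' w, brwMomIter ν n x w * ∑' y, brwMom ν w y * ENNReal.ofReal (1 - q y) :=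
          ENNReal.tsum_le_tsum fun w =>
            mul_le_mul_right (ofReal_one_sub_brwG_le hν0 hν1 hq0 hq1 w) _
      _ = ∑' y, brwMomIter ν (n + 1) x y * ENNReal.ofReal (1 - q y) := by
          simp only [brwMomIter, ← ENNReal.tsum_mul_left, ← ENNReal.tsum_mul_right, mul_assoc]
          exact ENNReal.tsum_comm

lemma brwIter_eq_iterate (ν : X → (X →₀ ℕ) → ℝ) (n : ℕ) : brwIter ν n = (brwG ν)^[n] 0 := by
  induction n with
  | zero => rfl
  | succ n ih => rw [Function.iterate_succ_apply', ← ih, brwIter]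

lemma ofReal_one_sub_brwIter_le [DecidableEq X] (hν0 : ∀ x f, 0 ≤ ν x f)
    (hν1 : ∀ x, HasSum (ν x) 1) (n : ℕ) (x : X) :
    ENNReal.ofReal (1 - brwIter ν n x) ≤ ∑' y, brwMomIter ν n x y := by
  simpa [brwIter_eq_iterate] using
    ofReal_one_sub_iterate_brwG_le hν0 hν1 n le_rfl zero_le_one x

lemma brwIter_nonneg_le_one (hν0 : ∀ x f, 0 ≤ ν x f) (hν1 : ∀ x, HasSum (ν x) 1) (n : ℕ) :
    0 ≤ brwIter ν n ∧ brwIter ν n ≤ 1 := by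
  induction n with
  | zero => exact ⟨le_rfl, zero_le_one⟩
  | succ n ih => exact ⟨brwG_nonneg hν0 ih.1, brwG_le_one hν0 hν1 ih.1 ih.2⟩

lemma monotone_brwIter (hν0 : ∀ x f, 0 ≤ ν x f) (hν1 : ∀ x, HasSum (ν x) 1) :
    Monotone (brwIter ν) := by
  refine monotone_nat_of_le_succ fun n => ?_
  induction n with
  | zero => exact brwG_nonneg hν0 le_rfl
  | succ n ih =>
    exact brwG_mono hν0 hν1 (brwIter_nonneg_le_one hν0 hν1 n).1 ih
      (brwIter_nonneg_le_one hν0 hν1 (n + 1)).2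

end Iteration

theorem brw_survival_implies_moment_liminf_pos_general {X : Type*} [DecidableEq X]
    (ν : X → (X →₀ ℕ) → ℝ)
    (hν0 : ∀ x f, 0 ≤ ν x f) (hν1 : ∀ x, HasSum (ν x) 1)
    (qbar : X → ℝ)
    (hqbar : ∀ x, Tendsto (fun n => brwIter ν n x) atTop (nhds (qbar x)))
    (x : X) (hx : qbar x < 1) :
    (∀ n : ℕ, ENNReal.ofReal (1 - qbar x) ≤ ∑' y : X, brwMomIter ν n x y) ∧
      0 < liminf (fun n : ℕ => ∑' y : X, brwMomIter ν n x y) atTop := by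
  have hmono : Monotone fun n => brwIter ν n x := fun _ _ h => monotone_brwIter hν0 hν1 h x
  have hq_le_qbar (n : ℕ) : brwIter ν n x ≤ qbar x := hmono.ge_of_tendsto (hqbar x) n
  have hbound (n : ℕ) : ENNReal.ofReal (1 - qbar x) ≤ ∑' y, brwMomIter ν n x y :=
    (ENNReal.ofReal_le_ofReal (by linarith [hq_le_qbar n])).trans
      (ofReal_one_sub_brwIter_le hν0 hν1 n x)
  refine ⟨hbound, (ENNReal.ofReal_pos.2 (sub_pos.2 hx)).trans_le ?_⟩
  exact le_liminf_of_le (by isBoundedDefault) (Eventually.of_forall hbound)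

/-- if `q̄(x) < 1` then `∑_y m⁽ⁿ⁾_{xy} ≥ 1 − q̄(x)` for every `n`;
in particular global survival from `x` implies
`liminf_n ∑_y m⁽ⁿ⁾_{xy} > 0`. -/
theorem brw_survival_implies_moment_liminf_pos {X : Type*} [Countable X] [DecidableEq X]
    (ν : X → (X →₀ ℕ) → ℝ)
    (hν0 : ∀ x f, 0 ≤ ν x f) (hν1 : ∀ x, HasSum (ν x) 1)
    (qbar : X → ℝ)
    (hqbar : ∀ x, Tendsto (fun n => brwIter ν n x) atTop (nhds (qbar x)))
    (x : X) (hx : qbar x < 1) :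
    (∀ n : ℕ, ENNReal.ofReal (1 - qbar x) ≤ ∑' y : X, brwMomIter ν n x y) ∧
      0 < liminf (fun n : ℕ => ∑' y : X, brwMomIter ν n x y) atTop :=
  brw_survival_implies_moment_liminf_pos_general ν hν0 hν1 qbar hqbar x hx
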